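/- arXiv:2510.12568 — 3 statements merged into one kernel-verified Lean document; each statement's English description precedes it below -/
import Mathlib

section
/- Let δ_m = (m/2)(1 − e^{-2/m}) for m ≥ 1, so that 0 < δ_m < 1. Then for every ξ ≥ 0, 0 ≤ e^{-2ξδ_m} − e^{-2ξ} ≤ ((2−δ_m)/2)(ξ e^{-ξδ_m} + ξ e^{-2ξ}) ≤ (4−δ_m²)/(4e δ_m). -/
lemma trap_aux (h : ℝ) (hh : 0 ≤ h) : 1 - Real.exp (-h) ≤ h * (1 + Real.exp (-h)) / 2 := by
  set g : ℝ → ℝ := fun y => y * (1 + Real.exp (-y)) / 2 - (1 - Real.exp (-y)) with hg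
  have key : ∀ x : ℝ, HasDerivAt g ((1 - Real.exp (-x) - x * Real.exp (-x)) / 2) x := by
    intro x
    have hexp : HasDerivAt (fun y : ℝ => Real.exp (-y)) (Real.exp (-x) * (-1)) x :=
      ((hasDerivAt_id x).neg).exp
    have h1 : HasDerivAt (fun y : ℝ => y * (1 + Real.exp (-y)))
        (1 * (1 + Real.exp (-x)) + x * (0 + Real.exp (-x) * (-1))) x :=
      (hasDerivAt_id x).mul ((hasDerivAt_const x 1).add hexp)
    have H := (h1.div_const 2).sub ((hasDerivAt_const x (1:ℝ)).sub hexp)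
    refine H.congr_deriv ?_
    ring
  have mono : MonotoneOn g (Set.Ici 0) := by
    apply monotoneOn_of_deriv_nonneg (convex_Ici 0)
    · exact Continuous.continuousOn (by fun_prop)
    · intro x hx
      exact (key x).differentiableAt.differentiableWithinAt
    · intro x hx
      rw [(key x).deriv]
      rw [interior_Ici] at hx
      have hx0 : (0:ℝ) ≤ x := le_of_lt hx
      have h2 := Real.add_one_le_exp x
      have hpos : (1 + x) * Real.exp (-x) ≤ 1 := by
        rw [Real.exp_neg, ← div_eq_mul_inv, div_le_one (Real.exp_pos x)]
        linarith
      nlinarith [Real.exp_pos (-x)]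
  have h2 := mono (Set.self_mem_Ici) (Set.mem_Ici.mpr hh) hh
  simp only [hg] at h2
  simp at h2
  linarith

lemma trap (a b : ℝ) (hab : a ≤ b) :
    Real.exp (-a) - Real.exp (-b) ≤ (b - a) * (Real.exp (-a) + Real.exp (-b)) / 2 := by
  have key := mul_le_mul_of_nonneg_left (trap_aux (b - a) (by linarith)) (Real.exp_pos (-a)).le
  have hE : Real.exp (-a) * Real.exp (-(b - a)) = Real.exp (-b) := by
    rw [← Real.exp_add]; ring_nf
  calc Real.exp (-a) - Real.exp (-b)
      = Real.exp (-a) * (1 - Real.exp (-(b - a))) := by rw [mul_sub, mul_one, hE]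
    _ ≤ Real.exp (-a) * ((b - a) * (1 + Real.exp (-(b - a))) / 2) := key
    _ = (b - a) * (Real.exp (-a) + Real.exp (-a) * Real.exp (-(b - a))) / 2 := by ring
    _ = (b - a) * (Real.exp (-a) + Real.exp (-b)) / 2 := by rw [hE]

lemma xexp_le (c x : ℝ) (hc : 0 < c) (hx : 0 ≤ x) :
    x * Real.exp (-(c * x)) ≤ 1 / (c * Real.exp 1) := by
  have h1 : c * x * Real.exp 1 ≤ Real.exp (c * x) := by
    have h0 : c * x ≤ Real.exp (c * x - 1) := by
      have := Real.add_one_le_exp (c * x - 1); linarith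
    have := mul_le_mul_of_nonneg_right h0 (Real.exp_pos 1).le
    rwa [← Real.exp_add, sub_add_cancel] at this
  rw [le_div_iff₀ (by positivity), Real.exp_neg,
    show x * (Real.exp (c * x))⁻¹ * (c * Real.exp 1) = (c * x * Real.exp 1) * (Real.exp (c * x))⁻¹ by ring,
    ← div_eq_mul_inv, div_le_one (Real.exp_pos _)]
  exact h1

/-- For `δ_m = (m/2)(1 - e^{-2/m})`, `m ≥ 1`: `0 < δ_m < 1`, and for every `ξ ≥ 0`,
`0 ≤ e^{-2ξδ_m} - e^{-2ξ} ≤ ((2-δ_m)/2)(ξ e^{-ξδ_m} + ξ e^{-2ξ}) ≤ (4-δ_m²)/(4e δ_m)`. -/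
theorem stmt_7 (m : ℕ) (hm : 1 ≤ m) :
    (0 < ((m : ℝ) / 2) * (1 - Real.exp (-(2 / (m : ℝ)))) ∧
      ((m : ℝ) / 2) * (1 - Real.exp (-(2 / (m : ℝ)))) < 1) ∧
    ∀ ξ : ℝ, 0 ≤ ξ →
      0 ≤ Real.exp (-(2 * ξ * (((m : ℝ) / 2) * (1 - Real.exp (-(2 / (m : ℝ)))))))
            - Real.exp (-(2 * ξ)) ∧
      Real.exp (-(2 * ξ * (((m : ℝ) / 2) * (1 - Real.exp (-(2 / (m : ℝ)))))))
            - Real.exp (-(2 * ξ))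
        ≤ ((2 - ((m : ℝ) / 2) * (1 - Real.exp (-(2 / (m : ℝ))))) / 2) *
            (ξ * Real.exp (-(ξ * (((m : ℝ) / 2) * (1 - Real.exp (-(2 / (m : ℝ)))))))
              + ξ * Real.exp (-(2 * ξ))) ∧
      ((2 - ((m : ℝ) / 2) * (1 - Real.exp (-(2 / (m : ℝ))))) / 2) *
            (ξ * Real.exp (-(ξ * (((m : ℝ) / 2) * (1 - Real.exp (-(2 / (m : ℝ)))))))
              + ξ * Real.exp (-(2 * ξ)))
        ≤ (4 - (((m : ℝ) / 2) * (1 - Real.exp (-(2 / (m : ℝ))))) ^ 2) /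
            (4 * Real.exp 1 * (((m : ℝ) / 2) * (1 - Real.exp (-(2 / (m : ℝ)))))) := by
  have hm1 : (1:ℝ) ≤ (m:ℝ) := by exact_mod_cast hm
  have hmpos : (0:ℝ) < (m:ℝ) := by linarith
  set d : ℝ := ((m : ℝ) / 2) * (1 - Real.exp (-(2 / (m : ℝ)))) with hd
  have hexplt : Real.exp (-(2 / (m:ℝ))) < 1 := by
    rw [Real.exp_lt_one_iff]
    have : (0:ℝ) < 2 / (m:ℝ) := by positivity
    linarith
  have hd0 : 0 < d := by
    apply mul_pos (by positivity)
    linarith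
  have hd1 : d < 1 := by
    have h := Real.add_one_lt_exp (x := -(2 / (m:ℝ))) (neg_ne_zero.mpr (by positivity))
    have h2 : 1 - Real.exp (-(2 / (m:ℝ))) < 2 / (m:ℝ) := by linarith
    have h3 : ((m:ℝ)/2) * (1 - Real.exp (-(2 / (m:ℝ)))) < ((m:ℝ)/2) * (2 / (m:ℝ)) :=
      mul_lt_mul_of_pos_left h2 (by positivity)
    rw [hd]
    calc ((m:ℝ)/2) * (1 - Real.exp (-(2 / (m:ℝ)))) < ((m:ℝ)/2) * (2 / (m:ℝ)) := h3
      _ = 1 := by field_simp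
  refine ⟨⟨hd0, hd1⟩, fun ξ hξ => ?_⟩
  have hle : 2 * ξ * d ≤ 2 * ξ := by nlinarith
  have hE1F : Real.exp (-(2 * ξ * d)) ≤ Real.exp (-(ξ * d)) := by
    apply Real.exp_le_exp.2
    nlinarith
  constructor
  · have := Real.exp_le_exp.2 (neg_le_neg hle)
    linarith
  constructor
  · have htr := trap (2 * ξ * d) (2 * ξ) hle
    refine htr.trans ?_
    set E1 := Real.exp (-(2 * ξ * d))
    set E2 := Real.exp (-(2 * ξ))
    set F := Real.exp (-(ξ * d))
    have h3 : 0 ≤ ξ * F := by positivity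
    have h4 : 0 ≤ ξ * E2 := by positivity
    have h5 : 0 ≤ ξ * (1 - d) * (F - E1) := by
      apply mul_nonneg (mul_nonneg hξ (by linarith))
      linarith
    nlinarith
  · have b1 := xexp_le d ξ hd0 hξ
    have b2 := xexp_le 2 ξ (by norm_num) hξ
    rw [mul_comm d ξ] at b1
    have h2d : (0:ℝ) ≤ 2 - d := by linarith
    have step : ((2 - d) / 2) * (ξ * Real.exp (-(ξ * d)) + ξ * Real.exp (-(2 * ξ)))
        ≤ ((2 - d) / 2) * (1 / (d * Real.exp 1) + 1 / (2 * Real.exp 1)) := by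
      apply mul_le_mul_of_nonneg_left _ (by linarith)
      gcongr <;> linarith [b1, b2]
    refine step.trans (le_of_eq ?_)
    have he := Real.exp_pos 1
    field_simp
    ring
end

section
/- A power series method P_ρ is regular (i.e., every convergent sequence is P_ρ-convergent to the same limit) if and only if for every fixed m, lim_{y→R⁻} ρ_m y^m / ρ(y) = 0. -/
open Filter

/-- The filter describing `y → R⁻` through positive reals below the radius `R ∈ (0,∞]`:
for `R = ∞` this is `atTop`, otherwise approach of `R.toReal` from below. -/
noncomputable def psFilter (R : ENNReal) : Filter ℝ :=
  (if R = ⊤ then Filter.atTop else nhdsWithin R.toReal (Set.Iio R.toReal)) ⊓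
    Filter.principal {y : ℝ | 0 < y ∧ ENNReal.ofReal y < R}

open Finset Topology

/-! The method averages `x` against the probability weights `w_y(m) = ρ_m y^m / ρ(y)`.
Testing it on the indicator sequence of `{m}`, which tends to `0`, shows that regularity forces `w_y(m) → 0`.
Conversely, if `x → 0` and `|x m| ≤ δ` for `m ≥ N`, then `|∑ x_m w_y(m)|` is at most
`∑_{m<N} |x_m| w_y(m) + δ`, and the finite sum tends to `0`; the general case follows by
subtracting the limit, since the weights sum to `1`. -/

lemma exists_abs_le_of_tendsto {x : ℕ → ℝ} {L : ℝ} (hx : Tendsto x atTop (𝓝 L)) :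
    ∃ C, ∀ m, |x m| ≤ C :=
  let ⟨C, hC⟩ := hx.abs.bddAbove_range
  ⟨C, fun m => hC ⟨m, rfl⟩⟩

lemma summable_mul_of_abs_le {x w : ℕ → ℝ} {C : ℝ} (hC : ∀ m, |x m| ≤ C)
    (hw0 : ∀ m, 0 ≤ w m) (hw : Summable w) : Summable fun m => x m * w m :=
  (hw.mul_left C).of_norm_bounded fun m => by
    rw [Real.norm_eq_abs, abs_mul, abs_of_nonneg (hw0 m)]
    exact mul_le_mul_of_nonneg_right (hC m) (hw0 m)

lemma abs_tsum_mul_le {x w : ℕ → ℝ} {C δ : ℝ} {N : ℕ} (hC : ∀ m, |x m| ≤ C)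
    (hN : ∀ m, N ≤ m → |x m| ≤ δ) (hw0 : ∀ m, 0 ≤ w m) (hw : HasSum w 1) :
    |∑' m, x m * w m| ≤ ∑ m ∈ range N, |x m| * w m + δ := by
  have hδ : 0 ≤ δ := (abs_nonneg _).trans (hN N le_rfl)
  have habs : Summable fun m => |x m| * w m :=
    summable_mul_of_abs_le (fun m => (abs_abs (x m)).trans_le (hC m)) hw0 hw.summable
  have hhead : HasSum (fun m => if m < N then |x m| * w m else 0)
      (∑ m ∈ range N, |x m| * w m) := by
    have h : HasSum (fun m => if m < N then |x m| * w m else 0)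
        (∑ m ∈ range N, if m < N then |x m| * w m else 0) :=
      hasSum_sum_of_ne_finset_zero fun m hm => if_neg (by simpa using hm)
    rwa [sum_congr rfl fun m hm => if_pos (mem_range.1 hm)] at h
  have hsplit : ∀ m, |x m| * w m ≤ (if m < N then |x m| * w m else 0) + δ * w m := by
    intro m
    split_ifs with hm
    · exact le_add_of_nonneg_right (mul_nonneg hδ (hw0 m))
    · rw [zero_add]
      exact mul_le_mul_of_nonneg_right (hN m (not_lt.1 hm)) (hw0 m)
  have hnorm : ∀ m, ‖x m * w m‖ = |x m| * w m := fun m => by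
    rw [Real.norm_eq_abs, abs_mul, abs_of_nonneg (hw0 m)]
  calc |∑' m, x m * w m|
      ≤ ∑' m, ‖x m * w m‖ := norm_tsum_le_tsum_norm (habs.congr fun m => (hnorm m).symm)
    _ = ∑' m, |x m| * w m := tsum_congr hnorm
    _ ≤ ∑ m ∈ range N, |x m| * w m + δ * 1 :=
        hasSum_le hsplit habs.hasSum (hhead.add (hw.mul_left δ))
    _ = ∑ m ∈ range N, |x m| * w m + δ := by rw [mul_one]

section WeightedMeans

variable {ι : Type*} {l : Filter ι} {w : ι → ℕ → ℝ}

lemma tendsto_tsum_mul_zero (hw : ∀ᶠ i in l, (∀ m, 0 ≤ w i m) ∧ HasSum (w i) 1)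
    (hw_zero : ∀ m, Tendsto (fun i => w i m) l (𝓝 0)) {x : ℕ → ℝ}
    (hx : Tendsto x atTop (𝓝 0)) : Tendsto (fun i => ∑' m, x m * w i m) l (𝓝 0) := by
  obtain ⟨C, hC⟩ := exists_abs_le_of_tendsto hx
  rw [Metric.tendsto_nhds]
  intro ε hε
  obtain ⟨N, hN⟩ := Metric.tendsto_atTop.1 hx (ε / 2) (half_pos hε)
  have hhead : Tendsto (fun i => ∑ m ∈ range N, |x m| * w i m) l (𝓝 0) := by
    simpa using tendsto_finsetSum (range N) fun m _ => (hw_zero m).const_mul |x m|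
  filter_upwards [hw, hhead.eventually (gt_mem_nhds (half_pos hε))] with i ⟨hw0, hw1⟩ hi
  rw [Real.dist_eq, sub_zero]
  have := abs_tsum_mul_le (δ := ε / 2) hC
    (fun m hm => by simpa [Real.dist_eq] using (hN m hm).le) hw0 hw1
  linarith

/-- Silverman–Toeplitz for nonnegative weights summing to `1`. -/
theorem tendsto_tsum_mul_iff (hw : ∀ᶠ i in l, (∀ m, 0 ≤ w i m) ∧ HasSum (w i) 1) :
    (∀ (x : ℕ → ℝ) (L : ℝ), Tendsto x atTop (𝓝 L) →
        Tendsto (fun i => ∑' m, x m * w i m) l (𝓝 L)) ↔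
      ∀ m, Tendsto (fun i => w i m) l (𝓝 0) := by
  refine ⟨fun hreg m => ?_, fun hw_zero x L hx => ?_⟩
  · have hsingle : Tendsto (Pi.single m 1 : ℕ → ℝ) atTop (𝓝 0) :=
      tendsto_const_nhds.congr' <| (eventually_gt_atTop m).mono fun k hk =>
        (Pi.single_eq_of_ne (M := fun _ => ℝ) hk.ne' 1).symm
    refine (hreg _ 0 hsingle).congr fun i => ?_
    rw [tsum_eq_single m fun k hk => by simp [Pi.single_eq_of_ne hk], Pi.single_eq_same, one_mul]
  · have hx0 : Tendsto (fun m => x m - L) atTop (𝓝 0) := by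
      simpa using hx.sub_const L
    obtain ⟨C, hC⟩ := exists_abs_le_of_tendsto hx0
    have hshift : ∀ᶠ i in l, ∑' m, (x m - L) * w i m + L = ∑' m, x m * w i m := by
      filter_upwards [hw] with i ⟨hw0, hw1⟩
      refine (((summable_mul_of_abs_le hC hw0 hw1.summable).hasSum.add
        (mul_one L ▸ hw1.mul_left L)).congr_fun fun m => ?_).tsum_eq.symm
      ring
    simpa using ((tendsto_tsum_mul_zero hw hw_zero hx0).add_const L).congr' hshift

end WeightedMeans

theorem stmt_10_general (ρ : ℕ → ℝ) (hρ0 : 0 < ρ 0) (hρ : ∀ m, 0 ≤ ρ m)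
    (R : ENNReal)
    (hsum : ∀ y : ℝ, 0 < y → ENNReal.ofReal y < R → Summable (fun m => ρ m * y ^ m)) :
    (∀ (x : ℕ → ℝ) (L : ℝ), Tendsto x atTop (nhds L) →
        Tendsto (fun y : ℝ => (∑' m : ℕ, x m * ρ m * y ^ m) / ∑' m : ℕ, ρ m * y ^ m)
          (psFilter R) (nhds L)) ↔
    (∀ m : ℕ, Tendsto (fun y : ℝ => ρ m * y ^ m / ∑' k : ℕ, ρ k * y ^ k)
        (psFilter R) (nhds 0)) := by
  have hw : ∀ᶠ y in psFilter R, (∀ m, 0 ≤ ρ m * y ^ m / ∑' k, ρ k * y ^ k) ∧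
      HasSum (fun m => ρ m * y ^ m / ∑' k, ρ k * y ^ k) 1 := by
    filter_upwards [mem_inf_of_right (mem_principal_self _)] with y ⟨hy, hyR⟩
    have hterm : ∀ m, 0 ≤ ρ m * y ^ m := fun m => mul_nonneg (hρ m) (pow_nonneg hy.le m)
    have hpos : 0 < ∑' k, ρ k * y ^ k := by
      have := (hsum y hy hyR).le_tsum 0 fun k _ => hterm k
      rw [pow_zero, mul_one] at this
      exact hρ0.trans_le this
    exact ⟨fun m => div_nonneg (hterm m) hpos.le,
      div_self hpos.ne' ▸ (hsum y hy hyR).hasSum.div_const _⟩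
  convert tendsto_tsum_mul_iff hw using 5 with x L hx
  ext y
  rw [← tsum_div_const]
  exact tsum_congr fun m => by rw [mul_assoc, mul_div_assoc]

/-- A power series method `P_ρ` is regular (every convergent sequence is `P_ρ`-convergent
to the same limit) iff `ρ_m y^m / ρ(y) → 0` as `y → R⁻` for every fixed `m`. -/
theorem stmt_10 (ρ : ℕ → ℝ) (hρ0 : 0 < ρ 0) (hρ : ∀ m, 0 ≤ ρ m)
    (R : ENNReal) (hR : 0 < R)
    (hsum : ∀ y : ℝ, 0 < y → ENNReal.ofReal y < R → Summable (fun m => ρ m * y ^ m)) :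
    (∀ (x : ℕ → ℝ) (L : ℝ), Tendsto x atTop (nhds L) →
        Tendsto (fun y : ℝ => (∑' m : ℕ, x m * ρ m * y ^ m) / ∑' m : ℕ, ρ m * y ^ m)
          (psFilter R) (nhds L)) ↔
    (∀ m : ℕ, Tendsto (fun y : ℝ => ρ m * y ^ m / ∑' k : ℕ, ρ k * y ^ k)
        (psFilter R) (nhds 0)) :=
  stmt_10_general ρ hρ0 hρ R hsum
end

section
/- Korovkin theorem via power series method: Let P be a regular power series method with weights p_m ≥ 0, p₀ > 0, p(y) = ∑ p_m y^m of radius R, and let {ℜ_m} be positive linear operators from C_*[0,∞) to B_*[0,∞) with ∑_m ‖ℜ_m φ₀‖_∞ p_m y^m < ∞ for all y ∈ (0,R). If for ν = 0,1,2, lim_{y→R⁻} (1/p(y)) ‖∑_m (ℜ_m φ_ν − φ_ν) p_m y^m‖_∞ = 0 where φ_ν(t) = e^{-νt}, then for every φ ∈ C_*[0,∞), lim_{y→R⁻} (1/p(y)) ‖∑_m (ℜ_m φ − φ) p_m y^m‖_∞ = 0. -/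
open Filter

/-- Continuous real functions on `[0,∞)` with a finite limit at infinity. -/
def CStar (f : ℝ → ℝ) : Prop :=
  ContinuousOn f (Set.Ici 0) ∧ ∃ L : ℝ, Tendsto f atTop (nhds L)

/-- Bounded real functions on `[0,∞)` with a finite limit at infinity. -/
def BStar (f : ℝ → ℝ) : Prop :=
  (∃ C : ℝ, ∀ ξ : ℝ, 0 ≤ ξ → |f ξ| ≤ C) ∧ ∃ L : ℝ, Tendsto f atTop (nhds L)

/-- The sup norm `‖f‖_∞ = sup_{ξ ≥ 0} |f(ξ)|`. -/
noncomputable def supNorm (f : ℝ → ℝ) : ℝ := ⨆ ξ : Set.Ici (0:ℝ), |f ξ.1|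

/-! Korovkin's argument with the test functions `1, e^{-t}, e^{-2t}`. Composing with `x ↦ -log x`
turns `φ ∈ C_*[0,∞)` into a continuous function on `[0,1]`, so for every `ε > 0` there is `K` with
`|φ t - φ ξ| ≤ ε + K (e^{-t} - e^{-ξ})²`. For a positive linear operator `T` this bounds
`|T φ ξ - φ ξ ⬝ T 1 ξ|` by `ε ⬝ T 1 ξ + K ⬝ T ((e^{-·} - e^{-ξ})²) ξ`, and the last term expands
into the deviations of `T` on the three test functions. Applied to `T f ξ = ∑ₘ ℜₘ f ξ pₘ yᵐ` and
divided by `p(y)`, the bound tends to `ε`. -/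

open Topology Set

lemma supNorm_nonneg (f : ℝ → ℝ) : 0 ≤ supNorm f :=
  Real.iSup_nonneg fun _ => abs_nonneg _

lemma supNorm_le {f : ℝ → ℝ} {C : ℝ} (h : ∀ ξ, 0 ≤ ξ → |f ξ| ≤ C) : supNorm f ≤ C :=
  haveI : Nonempty (Ici (0 : ℝ)) := ⟨⟨0, self_mem_Ici⟩⟩
  ciSup_le fun ξ => h ξ ξ.2

lemma abs_le_supNorm {f : ℝ → ℝ} (hf : ∃ C, ∀ ξ, 0 ≤ ξ → |f ξ| ≤ C) {ξ : ℝ} (hξ : 0 ≤ ξ) :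
    |f ξ| ≤ supNorm f := by
  obtain ⟨C, hC⟩ := hf
  exact le_ciSup (f := fun ξ : Ici (0 : ℝ) => |f ξ|) ⟨C, by rintro _ ⟨ξ, rfl⟩; exact hC ξ ξ.2⟩
    ⟨ξ, hξ⟩

lemma supNorm_congr {f g : ℝ → ℝ} (h : ∀ ξ, 0 ≤ ξ → f ξ = g ξ) : supNorm f = supNorm g :=
  iSup_congr fun ξ => by rw [h ξ ξ.2]

lemma tendsto_zero_of_forall_pos_eventually_le {α : Type*} {l : Filter α} {f : α → ℝ}
    (hf : ∀ᶠ x in l, 0 ≤ f x)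
    (h : ∀ ε > 0, ∃ g : α → ℝ, Tendsto g l (𝓝 ε) ∧ ∀ᶠ x in l, f x ≤ g x) :
    Tendsto f l (𝓝 0) := by
  refine tendsto_order.2 ⟨fun a ha => hf.mono fun x hx => ha.trans_le hx, fun a ha => ?_⟩
  obtain ⟨g, hg, hfg⟩ := h (a / 2) (by positivity)
  filter_upwards [hfg, hg.eventually (gt_mem_nhds (by linarith : a / 2 < a))] with x h1 h2
  exact h1.trans_lt h2

theorem IsCompact.exists_dist_le_add_mul_dist_sq {α β : Type*} [PseudoMetricSpace α]
    [PseudoMetricSpace β] {s : Set α} {g : α → β} (hs : IsCompact s) (hg : ContinuousOn g s)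
    {ε : ℝ} (hε : 0 < ε) :
    ∃ K, 0 ≤ K ∧ ∀ x ∈ s, ∀ y ∈ s, dist (g x) (g y) ≤ ε + K * dist x y ^ 2 := by
  obtain ⟨C, hC⟩ := Metric.isBounded_iff.1 (hs.image_of_continuousOn hg).isBounded
  obtain ⟨δ, hδ, hδε⟩ :=
    Metric.uniformContinuousOn_iff.1 (hs.uniformContinuousOn_of_continuous hg) ε hε
  -- once `dist x y ≥ δ`, the term `C / δ² ⬝ dist x y ²` exceeds the bound `C` on `dist (g x) (g y)`
  refine ⟨max C 0 / δ ^ 2, by positivity, fun x hx y hy => ?_⟩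
  have hK : 0 ≤ max C 0 / δ ^ 2 * dist x y ^ 2 := by positivity
  rcases lt_or_ge (dist x y) δ with hxy | hxy
  · linarith [hδε x hx y hy hxy]
  calc dist (g x) (g y) ≤ max C 0 :=
        (hC (mem_image_of_mem g hx) (mem_image_of_mem g hy)).trans (le_max_left _ _)
    _ ≤ max C 0 / δ ^ 2 * dist x y ^ 2 := by
        rw [div_mul_eq_mul_div, le_div_iff₀ (by positivity)]
        gcongr
    _ ≤ ε + max C 0 / δ ^ 2 * dist x y ^ 2 := by linarith

namespace CStar

lemma const (c : ℝ) : CStar fun _ => c :=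
  ⟨continuousOn_const, c, tendsto_const_nhds⟩

lemma comp {f : ℝ → ℝ} (hf : CStar f) {h : ℝ → ℝ} (hh : Continuous h) : CStar (h ∘ f) := by
  obtain ⟨hc, L, hL⟩ := hf
  exact ⟨hh.comp_continuousOn hc, h L, (hh.tendsto L).comp hL⟩

lemma add {f g : ℝ → ℝ} (hf : CStar f) (hg : CStar g) : CStar fun t => f t + g t := by
  obtain ⟨hfc, Lf, hLf⟩ := hf
  obtain ⟨hgc, Lg, hLg⟩ := hg
  exact ⟨hfc.add hgc, Lf + Lg, hLf.add hLg⟩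

lemma const_mul {f : ℝ → ℝ} (hf : CStar f) (a : ℝ) : CStar fun t => a * f t :=
  hf.comp (continuous_const_mul a)

lemma pow {f : ℝ → ℝ} (hf : CStar f) (n : ℕ) : CStar fun t => f t ^ n :=
  hf.comp (continuous_pow n)

lemma exp_neg : CStar fun t => Real.exp (-t) :=
  ⟨by fun_prop, 0, Real.tendsto_exp_atBot.comp tendsto_neg_atTop_atBot⟩

/-- `t ↦ e^{-t}` maps `[0,∞)` onto `(0,1]`, and a limit at infinity is continuity at `0`. -/
theorem exists_continuousOn_Icc_comp_exp_neg {f : ℝ → ℝ} (hf : CStar f) :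
    ∃ g : ℝ → ℝ, ContinuousOn g (Icc 0 1) ∧ ∀ t, 0 ≤ t → f t = g (Real.exp (-t)) := by
  obtain ⟨hc, L, hL⟩ := hf
  set g : ℝ → ℝ := fun x => if x = 0 then L else f (-Real.log x)
  have hg : EqOn g (fun x => f (-Real.log x)) (Ioc 0 1) := fun x hx => if_neg hx.1.ne'
  have hcont : ContinuousOn (fun x => f (-Real.log x)) (Ioc 0 1) :=
    hc.comp (Real.continuousOn_log.mono fun x hx => hx.1.ne').neg
      fun x hx => neg_nonneg.2 (Real.log_nonpos hx.1.le hx.2)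
  refine ⟨g, fun x hx => ?_, fun t _ => by simp [g, (Real.exp_pos _).ne']⟩
  rcases hx.1.eq_or_lt with rfl | hx0
  · rw [← Ioc_insert_left zero_le_one, continuousWithinAt_insert_self, ContinuousWithinAt,
      show g 0 = L from if_pos rfl]
    refine (hL.comp (tendsto_neg_atBot_atTop.comp ?_)).congr'
      (eventuallyEq_nhdsWithin_of_eqOn hg).symm
    exact Real.tendsto_log_nhdsGT_zero.mono_left (nhdsWithin_mono _ Ioc_subset_Ioi_self)
  · refine ((hcont.congr hg) x ⟨hx0, hx.2⟩).mono_of_mem_nhdsWithin ?_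
    exact mem_of_superset (inter_mem_nhdsWithin _ (Ioi_mem_nhds hx0))
      fun y hy => ⟨hy.2, hy.1.2⟩

theorem exists_abs_le {f : ℝ → ℝ} (hf : CStar f) : ∃ M, ∀ t, 0 ≤ t → |f t| ≤ M := by
  obtain ⟨g, hg, hfg⟩ := hf.exists_continuousOn_Icc_comp_exp_neg
  obtain ⟨M, hM⟩ := isCompact_Icc.exists_bound_of_continuousOn hg
  exact ⟨M, fun t ht => hfg t ht ▸ hM _ ⟨(Real.exp_pos _).le, Real.exp_le_one_iff.2 (by linarith)⟩⟩

theorem exists_abs_sub_le_add_mul_sq {f : ℝ → ℝ} (hf : CStar f) {ε : ℝ} (hε : 0 < ε) :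
    ∃ K, 0 ≤ K ∧ ∀ t ξ, 0 ≤ t → 0 ≤ ξ →
      |f t - f ξ| ≤ ε + K * (Real.exp (-t) - Real.exp (-ξ)) ^ 2 := by
  obtain ⟨g, hg, hfg⟩ := hf.exists_continuousOn_Icc_comp_exp_neg
  obtain ⟨K, hK, h⟩ := isCompact_Icc.exists_dist_le_add_mul_dist_sq hg hε
  have hexp : ∀ t, 0 ≤ t → Real.exp (-t) ∈ Icc (0 : ℝ) 1 := fun t ht =>
    ⟨(Real.exp_pos _).le, Real.exp_le_one_iff.2 (by linarith)⟩
  refine ⟨K, hK, fun t ξ ht hξ => ?_⟩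
  simpa [hfg t ht, hfg ξ hξ, Real.dist_eq, sq_abs] using h _ (hexp t ht) _ (hexp ξ hξ)

end CStar

def LinearOnCStar (T : (ℝ → ℝ) → ℝ → ℝ) : Prop :=
  ∀ (f g : ℝ → ℝ) (a b : ℝ), CStar f → CStar g →
    ∀ ξ : ℝ, 0 ≤ ξ → T (fun t => a * f t + b * g t) ξ = a * T f ξ + b * T g ξ

def MonotoneOnCStar (T : (ℝ → ℝ) → ℝ → ℝ) : Prop :=
  ∀ f g : ℝ → ℝ, CStar f → CStar g →
    (∀ t : ℝ, 0 ≤ t → f t ≤ g t) → ∀ ξ : ℝ, 0 ≤ ξ → T f ξ ≤ T g ξ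

-- For `T = weightedSum ℜ (fun m => p m * y ^ m)` and `P = p(y)` this is `∑ₘ (ℜₘ f ξ - f ξ) pₘ yᵐ`.
def deviation (T : (ℝ → ℝ) → ℝ → ℝ) (P : ℝ) (f : ℝ → ℝ) (ξ : ℝ) : ℝ := T f ξ - f ξ * P

section PositiveLinear

variable {T : (ℝ → ℝ) → ℝ → ℝ}

theorem abs_apply_sub_mul_apply_one_le (hlin : LinearOnCStar T) (hmono : MonotoneOnCStar T)
    {φ ψ : ℝ → ℝ} (hφ : CStar φ) (hψ : CStar ψ) {c ε K : ℝ}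
    (h : ∀ t, 0 ≤ t → |φ t - c| ≤ ε + K * ψ t) {ξ : ℝ} (hξ : 0 ≤ ξ) :
    |T φ ξ - c * T (fun _ => 1) ξ| ≤ ε * T (fun _ => 1) ξ + K * T ψ ξ := by
  have hup := hmono φ (fun t => (c + ε) * 1 + K * ψ t) hφ
    (((CStar.const 1).const_mul _).add (hψ.const_mul _))
    (fun t ht => by linarith [(abs_le.1 (h t ht)).2]) ξ hξ
  have hlo := hmono (fun t => (c - ε) * 1 + -K * ψ t) φ
    (((CStar.const 1).const_mul _).add (hψ.const_mul _)) hφ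
    (fun t ht => by linarith [(abs_le.1 (h t ht)).1]) ξ hξ
  rw [hlin _ _ _ _ (CStar.const 1) hψ ξ hξ] at hup hlo
  rw [abs_le]
  constructor <;> linarith

theorem abs_apply_le_mul_apply_one (hlin : LinearOnCStar T) (hmono : MonotoneOnCStar T)
    {f : ℝ → ℝ} (hf : CStar f) {M : ℝ} (hM : ∀ t, 0 ≤ t → |f t| ≤ M) {ξ : ℝ} (hξ : 0 ≤ ξ) :
    |T f ξ| ≤ M * T (fun _ => 1) ξ := by
  simpa using abs_apply_sub_mul_apply_one_le hlin hmono hf (CStar.const 1) (c := 0) (K := 0)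
    (by simpa using hM) hξ

theorem apply_sub_sq (hlin : LinearOnCStar T) {u : ℝ → ℝ} (hu : CStar u) (c : ℝ) {ξ : ℝ}
    (hξ : 0 ≤ ξ) :
    T (fun t => (u t - c) ^ 2) ξ =
      T (fun t => u t ^ 2) ξ - 2 * c * T u ξ + c ^ 2 * T (fun _ => 1) ξ := by
  have hsq : (fun t => (u t - c) ^ 2) = fun t => 1 * u t ^ 2 + 1 * (-2 * c * u t + c ^ 2 * 1) := by
    funext t; ring
  rw [hsq, hlin _ _ _ _ (hu.pow 2) ((hu.const_mul _).add ((CStar.const 1).const_mul _)) ξ hξ,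
    hlin _ _ _ _ hu (CStar.const 1) ξ hξ]
  ring

theorem exists_abs_deviation_le (hlin : LinearOnCStar T) (hmono : MonotoneOnCStar T)
    (hT : ∃ C, ∀ ξ, 0 ≤ ξ → T (fun _ => 1) ξ ≤ C) (P : ℝ) {f : ℝ → ℝ} (hf : CStar f) :
    ∃ C, ∀ ξ, 0 ≤ ξ → |deviation T P f ξ| ≤ C := by
  obtain ⟨C, hC⟩ := hT
  obtain ⟨M, hM⟩ := hf.exists_abs_le
  have hM0 : 0 ≤ M := (abs_nonneg _).trans (hM 0 le_rfl)
  refine ⟨M * C + M * |P|, fun ξ hξ => ?_⟩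
  calc |deviation T P f ξ| ≤ |T f ξ| + |f ξ| * |P| := by
        rw [deviation, ← abs_mul]; exact abs_sub _ _
    _ ≤ M * C + M * |P| := by
        gcongr
        · exact (abs_apply_le_mul_apply_one hlin hmono hf hM hξ).trans
            (mul_le_mul_of_nonneg_left (hC ξ hξ) hM0)
        · exact hM ξ hξ

theorem abs_deviation_le (hlin : LinearOnCStar T) (hmono : MonotoneOnCStar T) (P : ℝ)
    {u φ : ℝ → ℝ} (hu : CStar u) (hφ : CStar φ) {ξ ε K M : ℝ} (hξ : 0 ≤ ξ) (hM : |φ ξ| ≤ M)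
    (h : ∀ t, 0 ≤ t → |φ t - φ ξ| ≤ ε + K * (u t - u ξ) ^ 2) :
    |deviation T P φ ξ| ≤
      M * |deviation T P (fun _ => 1) ξ| + ε * (deviation T P (fun _ => 1) ξ + P) +
      K * (deviation T P (fun t => u t ^ 2) ξ - 2 * u ξ * deviation T P u ξ +
        u ξ ^ 2 * deviation T P (fun _ => 1) ξ) := by
  have hψ : CStar fun t => (u t - u ξ) ^ 2 := hu.comp ((continuous_sub_right (u ξ)).pow 2)
  have hK := abs_apply_sub_mul_apply_one_le hlin hmono hφ hψ h hξ
  rw [apply_sub_sq hlin hu _ hξ] at hK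
  simp only [deviation]
  calc |T φ ξ - φ ξ * P|
      = |φ ξ * (T (fun _ => 1) ξ - 1 * P) + (T φ ξ - φ ξ * T (fun _ => 1) ξ)| := by ring_nf
    _ ≤ |φ ξ| * |T (fun _ => 1) ξ - 1 * P| + |T φ ξ - φ ξ * T (fun _ => 1) ξ| := by
        rw [← abs_mul]; exact abs_add_le _ _
    _ ≤ M * |T (fun _ => 1) ξ - 1 * P| + (ε * T (fun _ => 1) ξ +
          K * (T (fun t => u t ^ 2) ξ - 2 * u ξ * T u ξ + u ξ ^ 2 * T (fun _ => 1) ξ)) :=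
        add_le_add (by gcongr) hK
    _ = _ := by ring

theorem supNorm_deviation_le (hlin : LinearOnCStar T) (hmono : MonotoneOnCStar T)
    (hT : ∃ C, ∀ ξ, 0 ≤ ξ → T (fun _ => 1) ξ ≤ C) (P : ℝ) {u φ : ℝ → ℝ} (hu : CStar u)
    (hu1 : ∀ t, 0 ≤ t → |u t| ≤ 1) (hφ : CStar φ) {ε K M : ℝ} (hM : ∀ t, 0 ≤ t → |φ t| ≤ M)
    (hε : 0 ≤ ε) (hK : 0 ≤ K)
    (h : ∀ t ξ, 0 ≤ t → 0 ≤ ξ → |φ t - φ ξ| ≤ ε + K * (u t - u ξ) ^ 2) :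
    supNorm (deviation T P φ) ≤
      M * supNorm (deviation T P fun _ => 1) + ε * (supNorm (deviation T P fun _ => 1) + P) +
        K * (supNorm (deviation T P fun t => u t ^ 2) + 2 * supNorm (deviation T P u) +
          supNorm (deviation T P fun _ => 1)) := by
  have hM0 : 0 ≤ M := (abs_nonneg _).trans (hM 0 le_rfl)
  have hdev {f : ℝ → ℝ} (hf : CStar f) {ξ : ℝ} (hξ : 0 ≤ ξ) :
      |deviation T P f ξ| ≤ supNorm (deviation T P f) :=
    abs_le_supNorm (exists_abs_deviation_le hlin hmono hT P hf) hξ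
  refine supNorm_le fun ξ hξ =>
    (abs_deviation_le hlin hmono P hu hφ hξ (hM ξ hξ) (h · ξ · hξ)).trans ?_
  have h0 := hdev (CStar.const 1) hξ
  have h1 := hdev hu hξ
  have h2 := hdev (hu.pow 2) hξ
  have hc := hu1 ξ hξ
  have hc2 : u ξ ^ 2 ≤ 1 := by nlinarith [sq_abs (u ξ), abs_nonneg (u ξ)]
  gcongr M * ?_ + ε * (?_ + P) + K * ?_
  · exact (le_abs_self _).trans h0
  · have hmid_term : -(2 * u ξ * deviation T P u ξ) ≤ 2 * supNorm (deviation T P u) :=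
      calc -(2 * u ξ * deviation T P u ξ) ≤ |2 * u ξ * deviation T P u ξ| := neg_le_abs _
        _ = 2 * (|u ξ| * |deviation T P u ξ|) := by rw [abs_mul, abs_mul, abs_two, mul_assoc]
        _ ≤ 2 * (1 * supNorm (deviation T P u)) := by gcongr
        _ = _ := by ring
    have hsq_term : u ξ ^ 2 * deviation T P (fun _ => 1) ξ ≤ supNorm (deviation T P fun _ => 1) :=
      calc u ξ ^ 2 * deviation T P (fun _ => 1) ξ ≤ u ξ ^ 2 * |deviation T P (fun _ => 1) ξ| := by
            gcongr; exact le_abs_self _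
        _ ≤ 1 * |deviation T P (fun _ => 1) ξ| := by gcongr
        _ ≤ _ := by rw [one_mul]; exact h0
    linarith [(le_abs_self _).trans h2]

end PositiveLinear

noncomputable def weightedSum (ℜ : ℕ → (ℝ → ℝ) → ℝ → ℝ) (w : ℕ → ℝ) (f : ℝ → ℝ) (ξ : ℝ) : ℝ :=
  ∑' m, ℜ m f ξ * w m

section WeightedSum

variable {ℜ : ℕ → (ℝ → ℝ) → ℝ → ℝ} {w : ℕ → ℝ}

theorem summable_apply_mul (hlin : ∀ m, LinearOnCStar (ℜ m)) (hmono : ∀ m, MonotoneOnCStar (ℜ m))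
    (hw : ∀ m, 0 ≤ w m) (hbdd : ∀ m, ∃ C, ∀ ξ, 0 ≤ ξ → |ℜ m (fun _ => 1) ξ| ≤ C)
    (hN : Summable fun m => supNorm (ℜ m fun _ => 1) * w m) {f : ℝ → ℝ} (hf : CStar f) {ξ : ℝ}
    (hξ : 0 ≤ ξ) : Summable fun m => ℜ m f ξ * w m := by
  obtain ⟨M, hM⟩ := hf.exists_abs_le
  have hM0 : 0 ≤ M := (abs_nonneg _).trans (hM 0 le_rfl)
  refine (hN.mul_left M).of_norm_bounded fun m => ?_
  rw [Real.norm_eq_abs, abs_mul, abs_of_nonneg (hw m), ← mul_assoc]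
  refine mul_le_mul_of_nonneg_right ?_ (hw m)
  calc |ℜ m f ξ| ≤ M * ℜ m (fun _ => 1) ξ := abs_apply_le_mul_apply_one (hlin m) (hmono m) hf hM hξ
    _ ≤ M * supNorm (ℜ m fun _ => 1) := by
        gcongr; exact (le_abs_self _).trans (abs_le_supNorm (hbdd m) hξ)

theorem LinearOnCStar.weightedSum (hlin : ∀ m, LinearOnCStar (ℜ m))
    (hsum : ∀ f, CStar f → ∀ ξ, 0 ≤ ξ → Summable fun m => ℜ m f ξ * w m) :
    LinearOnCStar (weightedSum ℜ w) := by
  intro f g a b hf hg ξ hξ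
  simp only [_root_.weightedSum, (hlin · f g a b hf hg ξ hξ), add_mul, mul_assoc]
  rw [((hsum f hf ξ hξ).mul_left a).tsum_add ((hsum g hg ξ hξ).mul_left b), tsum_mul_left,
    tsum_mul_left]

theorem MonotoneOnCStar.weightedSum (hmono : ∀ m, MonotoneOnCStar (ℜ m)) (hw : ∀ m, 0 ≤ w m)
    (hsum : ∀ f, CStar f → ∀ ξ, 0 ≤ ξ → Summable fun m => ℜ m f ξ * w m) :
    MonotoneOnCStar (weightedSum ℜ w) := fun f g hf hg hfg ξ hξ =>
  Summable.tsum_le_tsum (fun m => mul_le_mul_of_nonneg_right (hmono m f g hf hg hfg ξ hξ) (hw m))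
    (hsum f hf ξ hξ) (hsum g hg ξ hξ)

theorem weightedSum_one_le (hw : ∀ m, 0 ≤ w m)
    (hbdd : ∀ m, ∃ C, ∀ ξ, 0 ≤ ξ → |ℜ m (fun _ => 1) ξ| ≤ C)
    (hsum : ∀ f, CStar f → ∀ ξ, 0 ≤ ξ → Summable fun m => ℜ m f ξ * w m)
    (hN : Summable fun m => supNorm (ℜ m fun _ => 1) * w m) {ξ : ℝ} (hξ : 0 ≤ ξ) :
    weightedSum ℜ w (fun _ => 1) ξ ≤ ∑' m, supNorm (ℜ m fun _ => 1) * w m :=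
  Summable.tsum_le_tsum (fun m => mul_le_mul_of_nonneg_right
      ((le_abs_self _).trans (abs_le_supNorm (hbdd m) hξ)) (hw m))
    (hsum _ (CStar.const 1) ξ hξ) hN

theorem tsum_sub_mul_eq_deviation
    (hsum : ∀ f, CStar f → ∀ ξ, 0 ≤ ξ → Summable fun m => ℜ m f ξ * w m) (hw : Summable w)
    {f : ℝ → ℝ} (hf : CStar f) {ξ : ℝ} (hξ : 0 ≤ ξ) :
    ∑' m, (ℜ m f ξ - f ξ) * w m = deviation (weightedSum ℜ w) (∑' m, w m) f ξ := by
  simp only [sub_mul, deviation, _root_.weightedSum]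
  rw [(hsum f hf ξ hξ).tsum_sub (hw.mul_left _), tsum_mul_left]

end WeightedSum

noncomputable def psMeanDeviation (ℜ : ℕ → (ℝ → ℝ) → ℝ → ℝ) (p : ℕ → ℝ) (f : ℝ → ℝ) (y : ℝ) :
    ℝ :=
  supNorm (fun ξ => ∑' m, (ℜ m f ξ - f ξ) * p m * y ^ m) / ∑' m, p m * y ^ m

theorem psMeanDeviation_nonneg {ℜ : ℕ → (ℝ → ℝ) → ℝ → ℝ} {p : ℕ → ℝ} (hp : ∀ m, 0 ≤ p m)
    (f : ℝ → ℝ) {y : ℝ} (hy : 0 < y) : 0 ≤ psMeanDeviation ℜ p f y :=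
  div_nonneg (supNorm_nonneg _) (tsum_nonneg fun m => mul_nonneg (hp m) (pow_nonneg hy.le m))

theorem psMeanDeviation_le {ℜ : ℕ → (ℝ → ℝ) → ℝ → ℝ} {p : ℕ → ℝ} {y : ℝ} (hp0 : 0 < p 0)
    (hp : ∀ m, 0 ≤ p m) (hy : 0 < y) (hps : Summable fun m => p m * y ^ m)
    (hlin : ∀ m, LinearOnCStar (ℜ m)) (hmono : ∀ m, MonotoneOnCStar (ℜ m))
    (hbdd : ∀ m, ∃ C, ∀ ξ, 0 ≤ ξ → |ℜ m (fun _ => 1) ξ| ≤ C)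
    (hN : Summable fun m => supNorm (ℜ m fun _ => 1) * p m * y ^ m) {φ : ℝ → ℝ} (hφ : CStar φ)
    {ε K M : ℝ} (hM : ∀ t, 0 ≤ t → |φ t| ≤ M) (hε : 0 ≤ ε) (hK : 0 ≤ K)
    (h : ∀ t ξ, 0 ≤ t → 0 ≤ ξ → |φ t - φ ξ| ≤ ε + K * (Real.exp (-t) - Real.exp (-ξ)) ^ 2) :
    psMeanDeviation ℜ p φ y ≤
      M * psMeanDeviation ℜ p (fun t => Real.exp (-t) ^ 0) y +
        ε * (psMeanDeviation ℜ p (fun t => Real.exp (-t) ^ 0) y + 1) +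
        K * (psMeanDeviation ℜ p (fun t => Real.exp (-t) ^ 2) y +
          2 * psMeanDeviation ℜ p (fun t => Real.exp (-t) ^ 1) y +
          psMeanDeviation ℜ p (fun t => Real.exp (-t) ^ 0) y) := by
  have hw (m : ℕ) : 0 ≤ p m * y ^ m := mul_nonneg (hp m) (pow_nonneg hy.le m)
  have hP : 0 < ∑' m, p m * y ^ m := hps.tsum_pos hw 0 (by simpa using hp0)
  have hN' : Summable fun m => supNorm (ℜ m fun _ => 1) * (p m * y ^ m) := by
    simpa only [mul_assoc] using hN
  have hsum (f : ℝ → ℝ) (hf : CStar f) (ξ : ℝ) (hξ : 0 ≤ ξ) :=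
    summable_apply_mul hlin hmono hw hbdd hN' hf hξ
  have hdev {f : ℝ → ℝ} (hf : CStar f) :
      supNorm (fun ξ => ∑' m, (ℜ m f ξ - f ξ) * p m * y ^ m) =
        supNorm (deviation (weightedSum ℜ fun m => p m * y ^ m) (∑' m, p m * y ^ m) f) :=
    supNorm_congr fun ξ hξ => by
      simp only [mul_assoc]; exact tsum_sub_mul_eq_deviation hsum hps hf hξ
  have hexp_le (t : ℝ) (ht : 0 ≤ t) : |Real.exp (-t)| ≤ 1 := by
    rw [abs_of_pos (Real.exp_pos _)]
    exact Real.exp_le_one_iff.2 (by linarith)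
  have hest := supNorm_deviation_le (LinearOnCStar.weightedSum hlin hsum)
    (MonotoneOnCStar.weightedSum hmono hw hsum)
    ⟨_, fun ξ hξ => weightedSum_one_le hw hbdd hsum hN' hξ⟩ (∑' m, p m * y ^ m) CStar.exp_neg
    hexp_le hφ hM hε hK h
  simp only [psMeanDeviation, pow_zero, pow_one]
  rw [hdev hφ, hdev (CStar.const 1), hdev (CStar.exp_neg.pow 2), hdev CStar.exp_neg,
    div_le_iff₀ hP]
  refine hest.trans_eq ?_
  field_simp

theorem stmt_14_general (p : ℕ → ℝ) (hp0 : 0 < p 0) (hp : ∀ m, 0 ≤ p m)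
    (R : ENNReal)
    (hpsum : ∀ y : ℝ, 0 < y → ENNReal.ofReal y < R → Summable (fun m => p m * y ^ m))
    (ℜ : ℕ → (ℝ → ℝ) → ℝ → ℝ)
    (hmap : ∀ m f, CStar f → BStar (ℜ m f))
    (hlin : ∀ (m : ℕ) (f g : ℝ → ℝ) (a b : ℝ), CStar f → CStar g →
      ∀ ξ : ℝ, 0 ≤ ξ → ℜ m (fun t => a * f t + b * g t) ξ = a * ℜ m f ξ + b * ℜ m g ξ)
    (hpos : ∀ (m : ℕ) (f g : ℝ → ℝ), CStar f → CStar g →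
      (∀ t : ℝ, 0 ≤ t → f t ≤ g t) → ∀ ξ : ℝ, 0 ≤ ξ → ℜ m f ξ ≤ ℜ m g ξ)
    (hbound : ∀ y : ℝ, 0 < y → ENNReal.ofReal y < R →
      Summable (fun m => supNorm (ℜ m (fun _ => 1)) * p m * y ^ m))
    (htest : ∀ ν : ℕ, ν ≤ 2 →
      Tendsto (fun y : ℝ =>
          supNorm (fun ξ => ∑' m : ℕ,
            (ℜ m (fun t => Real.exp (-(ν : ℝ) * t)) ξ - Real.exp (-(ν : ℝ) * ξ)) *
              p m * y ^ m) / ∑' m : ℕ, p m * y ^ m)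
        (psFilter R) (nhds 0)) :
    ∀ φ : ℝ → ℝ, CStar φ →
      Tendsto (fun y : ℝ =>
          supNorm (fun ξ => ∑' m : ℕ, (ℜ m φ ξ - φ ξ) * p m * y ^ m) /
            ∑' m : ℕ, p m * y ^ m)
        (psFilter R) (nhds 0) := by
  intro φ hφ
  have hexp (ν : ℕ) (t : ℝ) : Real.exp (-(ν : ℝ) * t) = Real.exp (-t) ^ ν := by
    rw [← Real.exp_nat_mul, neg_mul, mul_neg]
  simp only [hexp] at htest
  have hdom : ∀ᶠ y in psFilter R, 0 < y ∧ ENNReal.ofReal y < R :=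
    mem_inf_of_right (mem_principal_self _)
  obtain ⟨M, hM⟩ := hφ.exists_abs_le
  refine tendsto_zero_of_forall_pos_eventually_le
    (hdom.mono fun y hy => psMeanDeviation_nonneg hp φ hy.1) fun ε hε => ?_
  obtain ⟨K, hK, hφK⟩ := hφ.exists_abs_sub_le_add_mul_sq hε
  have hlim := (((htest 0 (by norm_num)).const_mul M).add
    (((htest 0 (by norm_num)).add_const 1).const_mul ε)).add
      ((((htest 2 le_rfl).add ((htest 1 (by norm_num)).const_mul 2)).add
        (htest 0 (by norm_num))).const_mul K)
  rw [show M * 0 + ε * (0 + 1) + K * (0 + 2 * 0 + 0) = ε by ring] at hlim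
  refine ⟨_, hlim, ?_⟩
  filter_upwards [hdom] with y ⟨hy, hyR⟩
  exact psMeanDeviation_le hp0 hp hy (hpsum y hy hyR) hlin hpos
    (fun m => (hmap m _ (CStar.const 1)).1) (hbound y hy hyR) hφ hM hε.le hK hφK

/-- Korovkin theorem via a regular power series method: if the `P`-means of
`ℜ_m φ_ν - φ_ν` tend to `0` in sup norm for the exponential test functions
`φ_ν(t) = e^{-νt}`, `ν = 0,1,2`, then the same holds for every `φ ∈ C_*[0,∞)`. -/
theorem stmt_14 (p : ℕ → ℝ) (hp0 : 0 < p 0) (hp : ∀ m, 0 ≤ p m)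
    (R : ENNReal) (hR : 0 < R)
    (hpsum : ∀ y : ℝ, 0 < y → ENNReal.ofReal y < R → Summable (fun m => p m * y ^ m))
    (hreg : ∀ m : ℕ, Tendsto (fun y : ℝ => p m * y ^ m / ∑' k : ℕ, p k * y ^ k)
        (psFilter R) (nhds 0))
    (ℜ : ℕ → (ℝ → ℝ) → ℝ → ℝ)
    (hmap : ∀ m f, CStar f → BStar (ℜ m f))
    (hlin : ∀ (m : ℕ) (f g : ℝ → ℝ) (a b : ℝ), CStar f → CStar g →
      ∀ ξ : ℝ, 0 ≤ ξ → ℜ m (fun t => a * f t + b * g t) ξ = a * ℜ m f ξ + b * ℜ m g ξ)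
    (hpos : ∀ (m : ℕ) (f g : ℝ → ℝ), CStar f → CStar g →
      (∀ t : ℝ, 0 ≤ t → f t ≤ g t) → ∀ ξ : ℝ, 0 ≤ ξ → ℜ m f ξ ≤ ℜ m g ξ)
    (hbound : ∀ y : ℝ, 0 < y → ENNReal.ofReal y < R →
      Summable (fun m => supNorm (ℜ m (fun _ => 1)) * p m * y ^ m))
    (htest : ∀ ν : ℕ, ν ≤ 2 →
      Tendsto (fun y : ℝ =>
          supNorm (fun ξ => ∑' m : ℕ,
            (ℜ m (fun t => Real.exp (-(ν : ℝ) * t)) ξ - Real.exp (-(ν : ℝ) * ξ)) *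
              p m * y ^ m) / ∑' m : ℕ, p m * y ^ m)
        (psFilter R) (nhds 0)) :
    ∀ φ : ℝ → ℝ, CStar φ →
      Tendsto (fun y : ℝ =>
          supNorm (fun ξ => ∑' m : ℕ, (ℜ m φ ξ - φ ξ) * p m * y ^ m) /
            ∑' m : ℕ, p m * y ^ m)
        (psFilter R) (nhds 0) :=
  stmt_14_general p hp0 hp R hpsum ℜ hmap hlin hpos hbound htest
end
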